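/- arXiv:math/0406267 — 3 statements merged into one kernel-verified Lean document; each statement's English description precedes it below -/
import Mathlib

section
/- The group with presentation ⟨v, h ∣ v² = 1, h² = 1, vhv = hvh⟩ is isomorphic to the symmetric group on three symbols (equivalently, the dihedral group of the triangle). That is, there is a group isomorphism from this presented group to Equiv.Perm (Fin 3). -/
/-!
The generators `v, h` map to the adjacent transpositions `(0 1), (1 2)`, which satisfy the
relations and generate `S₃`, so the presented group surjects onto `S₃`. Conversely the relations
make `{1, v, h, vh, hv, vhv}` closed under right multiplication by the (self-inverse)
generators, so the presented group has at most `6 = |S₃|` elements and the surjection is bijective.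
-/

/-- The generator `v` (vertical dualization) as an element of the free group. -/
def vGen : FreeGroup (Fin 2) := FreeGroup.of 0

/-- The generator `h` (horizontal dualization) as an element of the free group. -/
def hGen : FreeGroup (Fin 2) := FreeGroup.of 1

/-- Relators for the group ⟨v, h ∣ v² = 1, h² = 1, vhv = hvh⟩. -/
def rels2 : Set (FreeGroup (Fin 2)) :=
  {vGen ^ 2, hGen ^ 2, (vGen * hGen * vGen) * (hGen * vGen * hGen)⁻¹}

namespace Subgroup

variable {G : Type*} [Group G] {a b : G}

theorem closure_pair_subset_of_braid (ha : a * a = 1) (hb : b * b = 1)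
    (hab : a * b * a = b * a * b) :
    (closure {a, b} : Set G) ⊆ {1, a, b, a * b, b * a, a * b * a} := by
  have inv_self : ∀ y ∈ ({a, b} : Set G), y⁻¹ = y := by
    rintro y (rfl | rfl)
    exacts [inv_eq_of_mul_eq_one_right ha, inv_eq_of_mul_eq_one_right hb]
  have mul_gen_mem : ∀ x ∈ ({1, a, b, a * b, b * a, a * b * a} : Set G),
      ∀ y ∈ ({a, b} : Set G), x * y ∈ ({1, a, b, a * b, b * a, a * b * a} : Set G) := by
    have ha' (c : G) : a * (a * c) = c := by rw [← mul_assoc, ha, one_mul]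
    have hab' : b * (a * b) = a * (b * a) := by simp only [← mul_assoc, hab]
    rintro x hx y (rfl | rfl) <;> rcases hx with rfl | rfl | rfl | rfl | rfl | rfl <;>
      simp [mul_assoc, ha, hb, ha', hab']
  intro x hx
  induction hx using closure_induction_right with
  | one => exact Or.inl rfl
  | mul_right x _ y hy ih => exact mul_gen_mem x ih y hy
  | mul_inv_cancel x _ y hy ih => rw [inv_self y hy]; exact mul_gen_mem x ih y hy

end Subgroup

theorem PresentedGroup.range_of_fin_two {rels : Set (FreeGroup (Fin 2))} :
    Set.range (of : Fin 2 → PresentedGroup rels) = {of 0, of 1} := by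
  ext; simp [Fin.exists_fin_two, eq_comm]

open PresentedGroup Equiv

theorem rels2_of_zero_mul_self : (of 0 : PresentedGroup rels2) * of 0 = 1 := by
  have := one_of_mem (rels := rels2) (x := vGen ^ 2) (by simp [rels2])
  rwa [map_pow, sq] at this

theorem rels2_of_one_mul_self : (of 1 : PresentedGroup rels2) * of 1 = 1 := by
  have := one_of_mem (rels := rels2) (x := hGen ^ 2) (by simp [rels2])
  rwa [map_pow, sq] at this

theorem rels2_braid : (of 0 * of 1 * of 0 : PresentedGroup rels2) = of 1 * of 0 * of 1 := by
  have := mk_eq_mk_of_mul_inv_mem (rels := rels2)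
    (x := vGen * hGen * vGen) (y := hGen * vGen * hGen) (by simp [rels2])
  rwa [map_mul, map_mul, map_mul, map_mul] at this

theorem univ_subset_rels2_words : (Set.univ : Set (PresentedGroup rels2)) ⊆
    {1, of 0, of 1, of 0 * of 1, of 1 * of 0, of 0 * of 1 * of 0} := by
  rw [← Subgroup.coe_top, ← closure_range_of, range_of_fin_two]
  exact Subgroup.closure_pair_subset_of_braid rels2_of_zero_mul_self rels2_of_one_mul_self
    rels2_braid

instance : Finite (PresentedGroup rels2) :=
  Set.finite_univ_iff.mp ((Set.toFinite _).subset univ_subset_rels2_words)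

theorem card_presentedGroup_rels2_le : Nat.card (PresentedGroup rels2) ≤ 6 := by
  rw [← Set.ncard_univ]
  grw [Set.ncard_le_ncard univ_subset_rels2_words, Set.ncard_insert_le, Set.ncard_insert_le,
    Set.ncard_insert_le, Set.ncard_insert_le, Set.ncard_insert_le, Set.ncard_singleton]

theorem lift_swap_castSucc_succ_rels2 :
    ∀ r ∈ rels2, FreeGroup.lift (fun i : Fin 2 ↦ swap i.castSucc i.succ) r = 1 := by
  simp only [rels2, Set.mem_insert_iff, Set.mem_singleton_iff, forall_eq_or_imp, forall_eq,
    vGen, hGen, map_mul, map_pow, map_inv, FreeGroup.lift_apply_of]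
  decide

def rels2ToPerm : PresentedGroup rels2 →* Perm (Fin 3) :=
  toGroup lift_swap_castSucc_succ_rels2

theorem rels2ToPerm_surjective : Function.Surjective rels2ToPerm := by
  have hgen : Subgroup.closure (Set.range fun i : Fin 2 ↦ swap i.castSucc i.succ) = ⊤ :=
    Subgroup.closure_eq_top_of_mclosure_eq_top (Perm.mclosure_swap_castSucc_succ 2)
  rw [← MonoidHom.range_eq_top, MonoidHom.range_eq_map, ← closure_range_of,
    MonoidHom.map_closure, ← Set.range_comp, ← hgen]
  rfl

/-- The group ⟨v, h ∣ v² = 1, h² = 1, vhv = hvh⟩ of dualization operations on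
double vector bundles is isomorphic to the symmetric group on three symbols. -/
theorem presentedGroup_two_duals_iso_perm_fin_three :
    Nonempty (PresentedGroup rels2 ≃* Equiv.Perm (Fin 3)) := by
  have hcard : Nat.card (PresentedGroup rels2) ≤ Nat.card (Perm (Fin 3)) := by
    rw [Nat.card_perm, Nat.card_fin]
    exact card_presentedGroup_rels2_le
  exact ⟨.ofBijective rels2ToPerm (rels2ToPerm_surjective.bijective_of_nat_card_le hcard)⟩
end

section
/- In the presented group ⟨x, y, z ∣ x² = y² = z² = 1, xyx = yxy, yzy = zyz, zxz = xzx⟩, the identity (z·x·y·z)·(y·z·x·y)·(x·y·z·x) = 1 holds. (In the notation of the paper, Q_Z Q_Y Q_X = I is a consequence of the relations (7.1).) -/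
/-! The braid relations collapse `Q_Y Q_X = yzxy·xyzx` to `zyxz`, which is `Q_Z = zxyz` read
backwards; since `x`, `y`, `z` are involutions, that reversed word is `Q_Z⁻¹`. -/

/-- The generator `x` as an element of the free group on three generators. -/
def xGen : FreeGroup (Fin 3) := FreeGroup.of 0

/-- The generator `y` as an element of the free group on three generators. -/
def yGen : FreeGroup (Fin 3) := FreeGroup.of 1

/-- The generator `z` as an element of the free group on three generators. -/
def zGen : FreeGroup (Fin 3) := FreeGroup.of 2

/-- Relators for the group ⟨x, y, z ∣ x² = y² = z² = 1,
xyx = yxy, yzy = zyz, zxz = xzx⟩ (the relations (7.1) of the paper). -/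
def rels3 : Set (FreeGroup (Fin 3)) :=
  {xGen ^ 2, yGen ^ 2, zGen ^ 2,
   (xGen * yGen * xGen) * (yGen * xGen * yGen)⁻¹,
   (yGen * zGen * yGen) * (zGen * yGen * zGen)⁻¹,
   (zGen * xGen * zGen) * (xGen * zGen * xGen)⁻¹}

/-- The image of `x` in the presented group. -/
def X : PresentedGroup rels3 := PresentedGroup.of 0

/-- The image of `y` in the presented group. -/
def Y : PresentedGroup rels3 := PresentedGroup.of 1

/-- The image of `z` in the presented group. -/
def Z : PresentedGroup rels3 := PresentedGroup.of 2

section Involutions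

variable {M : Type*} [Monoid M] {x y z : M}

theorem zxyz_mul_zyxz_eq_one (hx : x * x = 1) (hy : y * y = 1) (hz : z * z = 1) :
    (z * x * y * z) * (z * y * x * z) = 1 :=
  calc (z * x * y * z) * (z * y * x * z)
      = z * (x * (y * (z * z) * y) * x) * z := by simp only [mul_assoc]
    _ = 1 := by rw [hz, mul_one, hy, mul_one, hx, mul_one, hz]

theorem yzxy_mul_xyzx_eq_zyxz (hy : y * y = 1) (hz : z * z = 1)
    (hxy : x * y * x = y * x * y) (hyz : y * z * y = z * y * z) (hzx : z * x * z = x * z * x) :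
    (y * z * x * y) * (x * y * z * x) = z * y * x * z :=
  calc (y * z * x * y) * (x * y * z * x)
      = y * z * (x * y * x) * y * z * x := by simp only [mul_assoc]
    _ = (y * z * y) * (x * (y * y) * z * x) := by rw [hxy]; simp only [mul_assoc]
    _ = (z * y * z) * (z * x * z) := by rw [hy, mul_one, hyz, hzx]
    _ = z * y * (z * z) * x * z := by simp only [mul_assoc]
    _ = z * y * x * z := by rw [hz, mul_one]

end Involutions

section Relations

open PresentedGroup

theorem X_mul_X : X * X = 1 := by
  have := one_of_mem (rels := rels3) (x := xGen ^ 2) (by simp [rels3])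
  rwa [map_pow, sq] at this

theorem Y_mul_Y : Y * Y = 1 := by
  have := one_of_mem (rels := rels3) (x := yGen ^ 2) (by simp [rels3])
  rwa [map_pow, sq] at this

theorem Z_mul_Z : Z * Z = 1 := by
  have := one_of_mem (rels := rels3) (x := zGen ^ 2) (by simp [rels3])
  rwa [map_pow, sq] at this

theorem X_mul_Y_mul_X : X * Y * X = Y * X * Y := by
  have := mk_eq_mk_of_mul_inv_mem (rels := rels3)
    (x := xGen * yGen * xGen) (y := yGen * xGen * yGen) (by simp [rels3])
  rwa [map_mul, map_mul, map_mul, map_mul] at this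

theorem Y_mul_Z_mul_Y : Y * Z * Y = Z * Y * Z := by
  have := mk_eq_mk_of_mul_inv_mem (rels := rels3)
    (x := yGen * zGen * yGen) (y := zGen * yGen * zGen) (by simp [rels3])
  rwa [map_mul, map_mul, map_mul, map_mul] at this

theorem Z_mul_X_mul_Z : Z * X * Z = X * Z * X := by
  have := mk_eq_mk_of_mul_inv_mem (rels := rels3)
    (x := zGen * xGen * zGen) (y := xGen * zGen * xGen) (by simp [rels3])
  rwa [map_mul, map_mul, map_mul, map_mul] at this

end Relations

/-- In ⟨x, y, z ∣ x² = y² = z² = 1, xyx = yxy, yzy = zyz, zxz = xzx⟩, the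
identity `Q_Z · Q_Y · Q_X = 1` holds, where `Q_X = xyzx`, `Q_Y = yzxy`,
`Q_Z = zxyz`. -/
theorem QZ_mul_QY_mul_QX_eq_one :
    (Z * X * Y * Z) * (Y * Z * X * Y) * (X * Y * Z * X) = 1 := by
  rw [mul_assoc, yzxy_mul_xyzx_eq_zyxz Y_mul_Y Z_mul_Z X_mul_Y_mul_X Y_mul_Z_mul_Y Z_mul_X_mul_Z]
  exact zxyz_mul_zyxz_eq_one X_mul_X Y_mul_Y Z_mul_Z
end

section
/- Let VB₃ be the presented group ⟨x, y, z ∣ x² = y² = z² = 1, xyx = yxy, yzy = zyz, zxz = xzx, (xyz)⁴ = 1, (yzx)⁴ = 1, (zxy)⁴ = 1⟩. For every group H with cardinality 384, there is no injective group homomorphism from VB₃ into H. (In particular, VB₃ is not isomorphic to a subgroup of the full symmetry group of the hypercube, which has order 384, since VB₃ has order 72 and 72 does not divide 384.) -/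
/-- Relators for the group 𝒱ℬ₃ = ⟨x, y, z ∣ x² = y² = z² = 1, xyx = yxy,
yzy = zyz, zxz = xzx, (xyz)⁴ = (yzx)⁴ = (zxy)⁴ = 1⟩ of dualization
operations of a triple vector bundle. -/
def relsVB3 : Set (FreeGroup (Fin 3)) :=
  {xGen ^ 2, yGen ^ 2, zGen ^ 2,
   (xGen * yGen * xGen) * (yGen * xGen * yGen)⁻¹,
   (yGen * zGen * yGen) * (zGen * yGen * zGen)⁻¹,
   (zGen * xGen * zGen) * (xGen * zGen * xGen)⁻¹,
   (xGen * yGen * zGen) ^ 4, (yGen * zGen * xGen) ^ 4, (zGen * xGen * yGen) ^ 4}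

/-- The group 𝒱ℬ₃ of dualization operations of a triple vector bundle. -/
abbrev VB3 : Type := PresentedGroup relsVB3

/- Auxiliary material: a degree-9 permutation representation of VB3 (the action
on the cosets of a Sylow 2-subgroup), whose image contains a subgroup of order 9. -/

def permX : Equiv.Perm (Fin 9) := ⟨![1,0,5,7,8,2,6,3,4], ![1,0,5,7,8,2,6,3,4], by decide, by decide⟩
def permY : Equiv.Perm (Fin 9) := ⟨![2,3,0,1,6,7,4,5,8], ![2,3,0,1,6,7,4,5,8], by decide, by decide⟩
def permZ : Equiv.Perm (Fin 9) := ⟨![3,4,6,0,1,5,2,8,7], ![3,4,6,0,1,5,2,8,7], by decide, by decide⟩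
def k00 : Equiv.Perm (Fin 9) := ⟨![0,1,2,3,4,5,6,7,8], ![0,1,2,3,4,5,6,7,8], by decide, by decide⟩
def k01 : Equiv.Perm (Fin 9) := ⟨![1,6,4,2,3,7,0,8,5], ![6,0,3,4,2,8,1,5,7], by decide, by decide⟩
def k02 : Equiv.Perm (Fin 9) := ⟨![6,0,3,4,2,8,1,5,7], ![1,6,4,2,3,7,0,8,5], by decide, by decide⟩
def k10 : Equiv.Perm (Fin 9) := ⟨![5,7,1,0,6,3,8,2,4], ![3,2,7,5,8,0,4,1,6], by decide, by decide⟩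
def k11 : Equiv.Perm (Fin 9) := ⟨![7,8,6,1,0,2,5,4,3], ![4,3,5,8,7,6,2,0,1], by decide, by decide⟩
def k12 : Equiv.Perm (Fin 9) := ⟨![8,5,0,6,1,4,7,3,2], ![2,4,8,7,5,1,3,6,0], by decide, by decide⟩
def k20 : Equiv.Perm (Fin 9) := ⟨![3,2,7,5,8,0,4,1,6], ![5,7,1,0,6,3,8,2,4], by decide, by decide⟩
def k21 : Equiv.Perm (Fin 9) := ⟨![2,4,8,7,5,1,3,6,0], ![8,5,0,6,1,4,7,3,2], by decide, by decide⟩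
def k22 : Equiv.Perm (Fin 9) := ⟨![4,3,5,8,7,6,2,0,1], ![7,8,6,1,0,2,5,4,3], by decide, by decide⟩

def permF : Fin 3 → Equiv.Perm (Fin 9) := ![permX, permY, permZ]

lemma lift_relsVB3 : ∀ r ∈ relsVB3, FreeGroup.lift permF r = 1 := by
  intro r hr
  simp only [relsVB3, Set.mem_insert_iff, Set.mem_singleton_iff] at hr
  rcases hr with rfl|rfl|rfl|rfl|rfl|rfl|rfl|rfl|rfl <;>
    simp only [xGen, yGen, zGen, map_mul, map_inv, map_pow, FreeGroup.lift_apply_of, permF] <;>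
    decide

def phiVB3 : VB3 →* Equiv.Perm (Fin 9) := PresentedGroup.toGroup lift_relsVB3

def finsetK : Finset (Equiv.Perm (Fin 9)) := {k00, k01, k02, k10, k11, k12, k20, k21, k22}

def subK : Subgroup (Equiv.Perm (Fin 9)) where
  carrier := {p | p ∈ finsetK}
  one_mem' := by decide
  mul_mem' := by
    intro a b ha hb
    have ha' : a ∈ finsetK := ha
    have hb' : b ∈ finsetK := hb
    fin_cases ha' <;> fin_cases hb' <;> decide
  inv_mem' := by
    intro a ha
    have ha' : a ∈ finsetK := ha
    fin_cases ha' <;> decide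

lemma card_subK : Nat.card subK = 9 := by
  have h : Nat.card (finsetK : Set (Equiv.Perm (Fin 9))) = 9 := by
    rw [Nat.card_coe_set_eq, Set.ncard_coe_finset]
    decide
  exact h

lemma phi_of (i : Fin 3) :
    phiVB3 (PresentedGroup.of i) = permF i := PresentedGroup.toGroup.of lift_relsVB3

lemma subK_le_range : subK ≤ phiVB3.range := by
  intro g hg
  have hg' : g ∈ finsetK := hg
  set a : VB3 := PresentedGroup.of 0 * PresentedGroup.of 1 with ha
  set b : VB3 := PresentedGroup.of 1 * PresentedGroup.of 2 with hb
  have hpa : phiVB3 a = permX * permY := by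
    simp [ha, map_mul, phi_of, permF]
  have hpb : phiVB3 b = permY * permZ := by
    simp [hb, map_mul, phi_of, permF]
  fin_cases hg'
  · exact ⟨1, by rw [map_one]; decide⟩
  · exact ⟨b, by rw [hpb]; decide⟩
  · exact ⟨b ^ 2, by rw [map_pow, hpb]; decide⟩
  · exact ⟨a, by rw [hpa]; decide⟩
  · exact ⟨a * b, by rw [map_mul, hpa, hpb]; decide⟩
  · exact ⟨a * b ^ 2, by rw [map_mul, map_pow, hpa, hpb]; decide⟩
  · exact ⟨a ^ 2, by rw [map_pow, hpa]; decide⟩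
  · exact ⟨a ^ 2 * b, by rw [map_mul, map_pow, hpa, hpb]; decide⟩
  · exact ⟨a ^ 2 * b ^ 2, by rw [map_mul, map_pow, map_pow, hpa, hpb]; decide⟩

/-- The group 𝒱ℬ₃ does not embed in any group of order 384; in particular it
is not isomorphic to a subgroup of the full symmetry group of the hypercube. -/
theorem VB3_not_embeds_in_card_384 (H : Type*) [Group H] (hH : Nat.card H = 384)
    (f : VB3 →* H) : ¬ Function.Injective f := by
  intro hf
  have h384 : Nat.card VB3 ∣ 384 := hH ▸ Subgroup.card_dvd_of_injective f hf
  have h1 : Nat.card subK ∣ Nat.card phiVB3.range := Subgroup.card_dvd_of_le subK_le_range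
  have h2 : Nat.card phiVB3.range ∣ Nat.card VB3 :=
    Subgroup.card_dvd_of_surjective phiVB3.rangeRestrict phiVB3.rangeRestrict_surjective
  have h9 : (9 : ℕ) ∣ 384 := card_subK ▸ ((h1.trans h2).trans h384)
  norm_num at h9
end
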